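/- arXiv:1406.5706 — 2 statements merged into one kernel-verified Lean document; each statement's English description precedes it below -/
import Mathlib

section
/- Let 0 < α < 1 and n ≥ 1. Then K is invertible and its inverse is tridiagonal: (K⁻¹)_{ij} = 0 whenever |i − j| > 1. -/
/-!
Writing `U` for the upper triangular matrix of ones, any matrix `f (max i j)` factors as
`U D Uᵀ` with `D` the diagonal matrix of the decrements `f k - f (k + 1)` (with `f n = 0`),
since `(U D Uᵀ)_{ij}` sums `D` over `k ≥ max i j` and this sum telescopes. For the TC kernel
the decrements are `α^k (1 - α)` and `α^n`, nonzero when `0 < α < 1`. The inverse of `U` is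
the upper bidiagonal matrix with `1` on the diagonal and `-1` above it, so
`K⁻¹ = (U⁻¹)ᵀ D⁻¹ U⁻¹` is lower bidiagonal × diagonal × upper bidiagonal, hence tridiagonal.
-/

open Matrix Finset

variable {R : Type*} [CommRing R] {n : ℕ}

def upperOnes (n : ℕ) : Matrix (Fin n) (Fin n) R :=
  of fun i j => if (i : ℕ) ≤ j then 1 else 0

def upperOnesInv (n : ℕ) : Matrix (Fin n) (Fin n) R :=
  of fun i j => (if (i : ℕ) = j then 1 else 0) - if (i : ℕ) + 1 = j then 1 else 0

theorem le_and_le_add_one_of_upperOnesInv_apply_ne_zero {k i : Fin n}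
    (h : (upperOnesInv n : Matrix (Fin n) (Fin n) R) k i ≠ 0) : (k : ℕ) ≤ i ∧ (i : ℕ) ≤ k + 1 := by
  by_contra hki
  apply h
  simp only [upperOnesInv, of_apply]
  rw [if_neg (by omega), if_neg (by omega), sub_zero]

theorem upperOnesInv_mul_upperOnes :
    upperOnesInv n * upperOnes n = (1 : Matrix (Fin n) (Fin n) R) := by
  ext i j
  have := j.isLt
  simp only [mul_apply, upperOnesInv, upperOnes, of_apply]
  rw [Fin.sum_univ_eq_sum_range (fun k => ((if (i : ℕ) = k then (1 : R) else 0) -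
    if (i : ℕ) + 1 = k then 1 else 0) * if k ≤ j then 1 else 0)]
  simp only [sub_mul, ite_mul, one_mul, zero_mul, sum_sub_distrib, sum_ite_eq, mem_range,
    one_apply, ← Fin.val_inj]
  split_ifs <;> first | omega | simp

theorem upperOnes_mul_diagonal_mul_transpose_apply (d : ℕ → R) (i j : Fin n) :
    (upperOnes n * diagonal (fun k : Fin n => d k) * (upperOnes n)ᵀ : Matrix (Fin n) (Fin n) R)
      i j = ∑ k ∈ Ico (max i j : ℕ) n, d k := by
  rw [mul_apply]
  simp only [mul_diagonal, transpose_apply, upperOnes, of_apply]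
  rw [Fin.sum_univ_eq_sum_range (fun k => (if (i : ℕ) ≤ k then (1 : R) else 0) * d k *
      if (j : ℕ) ≤ k then 1 else 0),
    ← sum_range_add_sum_Ico _ (show (max i j : ℕ) ≤ n by omega),
    sum_eq_zero fun k hk => ?below, zero_add]
  · refine sum_congr rfl fun k hk => ?_
    rw [mem_Ico, max_le_iff] at hk
    simp [hk.1]
  · rw [mem_range, lt_max_iff] at hk
    rcases hk with h | h <;> simp [not_le.2 h]

theorem of_max_eq_upperOnes_mul_diagonal_mul_transpose (f : ℕ → R) (hf : f n = 0) :
    (of fun i j : Fin n => f (max i j)) =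
      upperOnes n * diagonal (fun k : Fin n => f k - f (k + 1)) * (upperOnes n)ᵀ := by
  ext i j
  rw [upperOnes_mul_diagonal_mul_transpose_apply (fun k => f k - f (k + 1)), of_apply, ← neg_inj,
    ← sum_neg_distrib]
  simp only [neg_sub]
  rw [sum_Ico_sub f (by omega), hf, zero_sub]

theorem isUnit_det_upperOnes_mul_diagonal_mul_transpose {d : Fin n → R} (hd : ∀ k, IsUnit (d k)) :
    IsUnit (upperOnes n * diagonal d * (upperOnes n)ᵀ).det := by
  have hU : IsUnit (upperOnes n : Matrix (Fin n) (Fin n) R).det :=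
    isUnit_det_of_left_inverse upperOnesInv_mul_upperOnes
  rw [det_mul, det_mul, det_transpose, det_diagonal]
  exact (hU.mul (IsUnit.prod_univ_iff.2 hd)).mul hU

theorem transpose_mul_diagonal_mul_apply_eq_zero {A : Matrix (Fin n) (Fin n) R}
    (hA : ∀ k i, A k i ≠ 0 → (k : ℕ) ≤ i ∧ (i : ℕ) ≤ k + 1) (d : Fin n → R) {i j : Fin n}
    (hij : (i : ℕ) + 1 < j ∨ (j : ℕ) + 1 < i) : (Aᵀ * diagonal d * A) i j = 0 := by
  rw [mul_apply]
  refine sum_eq_zero fun k _ => ?_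
  rw [mul_diagonal, transpose_apply]
  by_contra h
  have hi := hA k i (left_ne_zero_of_mul (left_ne_zero_of_mul h))
  have hj := hA k j (right_ne_zero_of_mul h)
  omega

theorem inv_upperOnes_mul_diagonal_mul_transpose_apply_eq_zero (d : Fin n → R) {i j : Fin n}
    (hij : (i : ℕ) + 1 < j ∨ (j : ℕ) + 1 < i) :
    (upperOnes n * diagonal d * (upperOnes n)ᵀ : Matrix (Fin n) (Fin n) R)⁻¹ i j = 0 := by
  rw [Matrix.mul_inv_rev, Matrix.mul_inv_rev, inv_diagonal, ← transpose_nonsing_inv,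
    inv_eq_left_inv upperOnesInv_mul_upperOnes, ← Matrix.mul_assoc]
  exact transpose_mul_diagonal_mul_apply_eq_zero
    (fun _ _ => le_and_le_add_one_of_upperOnesInv_apply_ne_zero) _ hij

theorem stmt_2_general (n : ℕ) (α : ℝ) (hα0 : 0 < α) (hα1 : α < 1)
    (K : Matrix (Fin n) (Fin n) ℝ)
    (hK : ∀ i j : Fin n, K i j = α ^ (max (i : ℕ) (j : ℕ) + 1)) :
    IsUnit K.det ∧ ∀ i j : Fin n, ((i : ℕ) + 1 < (j : ℕ) ∨ (j : ℕ) + 1 < (i : ℕ)) →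
      K⁻¹ i j = 0 := by
  -- cut off at `n`, so that the telescoping sum in the factorization of `K` ends in `0`
  set f : ℕ → ℝ := fun k => if k < n then α ^ (k + 1) else 0
  have hKf : K = of fun i j : Fin n => f (max i j) := by
    ext i j
    simp [hK, f]
  have hdecr : ∀ k : Fin n, f k - f (k + 1) ≠ 0 := by
    intro k
    simp only [f, k.isLt, if_true]
    split_ifs
    · rw [pow_succ α (k + 1), ← mul_one_sub]
      exact mul_ne_zero (pow_ne_zero _ hα0.ne') (sub_ne_zero.2 hα1.ne')
    · simpa using hα0.ne'
  rw [hKf, of_max_eq_upperOnes_mul_diagonal_mul_transpose f (by simp [f])]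
  exact ⟨isUnit_det_upperOnes_mul_diagonal_mul_transpose fun k => (hdecr k).isUnit,
    fun i j => inv_upperOnes_mul_diagonal_mul_transpose_apply_eq_zero _⟩

/-- The first-order stable spline kernel `K` (entries `K_{ij} = α^{max(i,j)}`,
1-indexed) is invertible and its inverse is tridiagonal:
`(K⁻¹)_{ij} = 0` whenever `|i − j| > 1`. -/
theorem stmt_2 (n : ℕ) (hn : 1 ≤ n) (α : ℝ) (hα0 : 0 < α) (hα1 : α < 1)
    (K : Matrix (Fin n) (Fin n) ℝ)
    (hK : ∀ i j : Fin n, K i j = α ^ (max (i : ℕ) (j : ℕ) + 1)) :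
    IsUnit K.det ∧ ∀ i j : Fin n, ((i : ℕ) + 1 < (j : ℕ) ∨ (j : ℕ) + 1 < (i : ℕ)) →
      K⁻¹ i j = 0 :=
  stmt_2_general n α hα0 hα1 K hK
end

section
/- Let 0 < α < 1 and n ≥ 2, and let e₁, e₂ denote the first two standard basis vectors of ℝⁿ. Then K⁻¹ e₁ = (1/(α − α²)) (e₁ − e₂); that is, the first column of K⁻¹ has first entry 1/(α − α²), second entry −1/(α − α²), and all remaining entries equal to zero. -/
/-!
Since `K_{i1} = K_{i2} = α^{max(i,2)}` for `i ≥ 2`, the vector `e₁ - e₂` is mapped by `K` to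
`(α - α²) e₁`. It remains to see that `K` is invertible: subtracting the second row from the first
leaves `(α - α², 0, …, 0)` as first row, with complementary minor `α K_n`, so
`det K_{n+1} = (α - α²) α^n det K_n`.
-/

namespace Matrix

variable {R : Type*}

def tcKernel [Monoid R] (α : R) (n : ℕ) : Matrix (Fin n) (Fin n) R :=
  of fun i j => α ^ (max (i : ℕ) j + 1)

section CommRing

variable [CommRing R] (α : R)

theorem tcKernel_mulVec_single_zero_sub_single_one (n : ℕ) :
    tcKernel α (n + 2) *ᵥ (Pi.single 0 1 - Pi.single 1 1) = (α - α ^ 2) • Pi.single 0 1 := by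
  ext i
  rw [mulVec_sub, mulVec_single_one, mulVec_single_one]
  rcases Fin.eq_zero_or_eq_succ i with rfl | ⟨i, rfl⟩
  · simp [tcKernel]
  · simp [tcKernel, Fin.succ_ne_zero]

theorem det_tcKernel_succ_succ (n : ℕ) :
    (tcKernel α (n + 2)).det = (α - α ^ 2) * α ^ (n + 1) * (tcKernel α (n + 1)).det := by
  set K := tcKernel α (n + 2)
  set A := K.updateRow 0 (K 0 + (-1 : R) • K 1)
  have hrow : ∀ j, A 0 j = (Pi.single 0 (α - α ^ 2) : Fin (n + 2) → R) j := by
    intro j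
    rcases Fin.eq_zero_or_eq_succ j with rfl | ⟨j, rfl⟩
    · simp [A, K, tcKernel]; ring
    · simp [A, K, tcKernel, Fin.succ_ne_zero]
  have hminor : A.submatrix Fin.succ Fin.succ = α • tcKernel α (n + 1) := by
    ext i j
    simp [A, K, tcKernel, Fin.succ_ne_zero, pow_succ]
    ring
  have hdet : A.det = K.det := det_updateRow_add_smul_self K Fin.zero_ne_one (-1)
  rw [← hdet, det_succ_row_zero,
    Fintype.sum_eq_single 0 fun j hj => by rw [hrow, Pi.single_eq_of_ne hj]; ring, hrow,
    Pi.single_eq_same, Fin.succAbove_zero, hminor, det_smul, Fintype.card_fin, Fin.val_zero,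
    pow_zero, one_mul]
  ring

theorem det_tcKernel_ne_zero [IsDomain R] {α : R} (hα : α - α ^ 2 ≠ 0) (n : ℕ) :
    (tcKernel α (n + 1)).det ≠ 0 := by
  have h0 : α ≠ 0 := by rintro rfl; simp at hα
  induction n with
  | zero => simpa [tcKernel] using h0
  | succ n ih =>
    rw [det_tcKernel_succ_succ]
    exact mul_ne_zero (mul_ne_zero hα (pow_ne_zero _ h0)) ih

end CommRing

theorem tcKernel_inv_mulVec_single_zero [Field R] {α : R} (hα : α - α ^ 2 ≠ 0) (n : ℕ) :
    (tcKernel α (n + 2))⁻¹ *ᵥ Pi.single 0 1 =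
      (α - α ^ 2)⁻¹ • (Pi.single 0 1 - Pi.single 1 1) := by
  have : Invertible (tcKernel α (n + 2)) :=
    invertibleOfIsUnitDet _ (det_tcKernel_ne_zero hα (n + 1)).isUnit
  refine inv_mulVec_eq_vec ?_
  rw [mulVec_smul, tcKernel_mulVec_single_zero_sub_single_one, smul_smul, inv_mul_cancel₀ hα,
    one_smul]

end Matrix

/-- For the first-order stable spline kernel `K` (entries `K_{ij} = α^{max(i,j)}`,
1-indexed) with `n ≥ 2`, the first column of `K⁻¹` is
`(1/(α − α²)) (e₁ − e₂)`. -/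
theorem stmt_8 (n : ℕ) (hn : 2 ≤ n) (α : ℝ) (hα0 : 0 < α) (hα1 : α < 1)
    (K : Matrix (Fin n) (Fin n) ℝ)
    (hK : ∀ i j : Fin n, K i j = α ^ (max (i : ℕ) (j : ℕ) + 1)) :
    K⁻¹.mulVec (Pi.single (⟨0, by omega⟩ : Fin n) (1 : ℝ)) =
      (1 / (α - α ^ 2)) •
        (Pi.single (⟨0, by omega⟩ : Fin n) (1 : ℝ) -
         Pi.single (⟨1, by omega⟩ : Fin n) (1 : ℝ)) := by
  obtain ⟨m, rfl⟩ : ∃ m, n = m + 2 := ⟨n - 2, by omega⟩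
  obtain rfl : K = Matrix.tcKernel α (m + 2) := Matrix.ext hK
  have hα : α - α ^ 2 ≠ 0 := by nlinarith
  rw [one_div]
  exact Matrix.tcKernel_inv_mulVec_single_zero hα m
end
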